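/- arXiv:1805.08494 — 5 statements merged into one kernel-verified Lean document; each statement's English description precedes it below -/
import Mathlib

section
/- For any f : ℤ^s → ℂ, the rank of the Hankel operator H(f) equals the dimension of the shift invariant space S(f) = span{τ^α f : α ∈ ℤ^s}; in particular, rank H(f) is finite if and only if dim S(f) is finite, and then the two numbers coincide. -/
/-!
Index the rows of an infinite matrix `g : ι → X → K` by `ι`. The row `a` of the finite
submatrix on `A × B` is the restriction of `g a` to `B`, so its rank is the dimension of the
restriction to `B` of `span (g '' A)`. This never exceeds `dim span (g '' A)`, and equals it for
suitable finite `B`, because a finite-dimensional space of functions is separated by finitely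
many points. Since `dim span (range g)` is the supremum of `dim span (g '' A)` over finite `A`,
the supremum of the ranks is `dim span (range g)`. For the Hankel matrix, `g α = τ^α f`.
-/

open Module Submodule Set

instance {K V ι : Type*} [DivisionRing K] [AddCommGroup V] [Module K V] (v : ι → V)
    (A : Finset ι) : FiniteDimensional K (span K (v '' A)) :=
  FiniteDimensional.span_of_finite K (A.finite_toSet.image v)

theorem toENat_rank_span_range_eq_iSup_finrank {K M ι : Type*} [DivisionRing K] [AddCommGroup M]
    [Module K M] (v : ι → M) :
    Cardinal.toENat (Module.rank K (span K (range v))) =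
      ⨆ A : Finset ι, (finrank K (span K (v '' A)) : ℕ∞) := by
  classical
  refine le_antisymm ?_ (iSup_le fun A => ?_)
  · rw [← ENat.forall_natCast_le_iff_le]
    intro n hn
    rw [Cardinal.natCast_le_toENat] at hn
    obtain ⟨b, hb_range, hb_span, hb_indep⟩ := exists_linearIndependent K (range v)
    replace hb_indep : LinearIndepOn K id b := hb_indep
    rw [← hb_span, rank_span_set hb_indep, Cardinal.le_mk_iff_exists_subset] at hn
    obtain ⟨t, htb, htn⟩ := hn
    lift t to Finset M using
      Cardinal.lt_aleph0_iff_set_finite.mp (htn ▸ Cardinal.natCast_lt_aleph0)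
    obtain ⟨A, -, rfl⟩ :=
      Finset.subset_set_image_iff.mp (image_univ (f := v) ▸ htb.trans hb_range)
    refine le_iSup_of_le A ?_
    rw [Nat.cast_le, ← Nat.cast_le (α := Cardinal), finrank_eq_rank, ← htn,
      ← rank_span_set (hb_indep.mono htb), Finset.coe_image]
  · rw [Cardinal.natCast_le_toENat, finrank_eq_rank]
    exact Submodule.rank_mono (span_mono (image_subset_range _ _))

theorem mem_ker_funLeft_domRestrict_iff {K X : Type*} [DivisionRing K] {W : Submodule K (X → K)}
    {B : Set X} {w : W} :
    w ∈ LinearMap.ker ((LinearMap.funLeft K K ((↑) : B → X)).domRestrict W) ↔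
      ∀ b ∈ B, (w : X → K) b = 0 := by
  simp [funext_iff]

theorem exists_finset_injective_funLeft_domRestrict {K X : Type*} [DivisionRing K]
    (W : Submodule K (X → K)) [FiniteDimensional K W] :
    ∃ B : Finset X,
      Function.Injective ((LinearMap.funLeft K K ((↑) : B → X)).domRestrict W) := by
  classical
  -- `W` is artinian, so some kernel is minimal; a point where a nonzero element of it does
  -- not vanish would shrink it further.
  let kerOn (B : Finset X) :=
    LinearMap.ker ((LinearMap.funLeft K K ((↑) : B → X)).domRestrict W)
  obtain ⟨_, ⟨B, rfl⟩, hmin⟩ := wellFounded_lt.has_min (range kerOn) ⟨_, ∅, rfl⟩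
  refine ⟨B, LinearMap.ker_eq_bot.mp (eq_bot_iff.mpr fun w hw => ?_)⟩
  by_contra hw0
  obtain ⟨x, hx⟩ : ∃ x, (w : X → K) x ≠ 0 := by
    by_contra! h
    exact hw0 ((mem_bot K).mpr (Subtype.ext (funext h)))
  refine hmin (kerOn (insert x B)) ⟨_, rfl⟩ (lt_of_le_of_ne (fun v hv => ?_) fun heq => ?_)
  · rw [mem_ker_funLeft_domRestrict_iff] at hv ⊢
    exact fun b hb => hv b (Finset.mem_insert_of_mem hb)
  · have hw' : w ∈ kerOn (insert x B) := heq ▸ hw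
    rw [mem_ker_funLeft_domRestrict_iff] at hw'
    exact hx (hw' x (Finset.mem_insert_self x B))

theorem iSup_finrank_map_funLeft {K X : Type*} [DivisionRing K] (W : Submodule K (X → K))
    [FiniteDimensional K W] :
    ⨆ B : Finset X, (finrank K (W.map (LinearMap.funLeft K K ((↑) : B → X))) : ℕ∞) =
      finrank K W := by
  refine le_antisymm (iSup_le fun B => Nat.cast_le.mpr (finrank_map_le _ _)) ?_
  obtain ⟨B, hB⟩ := exists_finset_injective_funLeft_domRestrict W
  refine le_iSup_of_le B (le_of_eq ?_)
  rw [← LinearMap.range_domRestrict, LinearMap.finrank_range_of_inj hB]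

theorem rank_of_eq_finrank_map_funLeft {K ι X : Type*} [Field K] (g : ι → X → K)
    (A : Finset ι) (B : Finset X) :
    (Matrix.of fun (a : A) (b : B) => g a b).rank =
      finrank K ((span K (g '' A)).map (LinearMap.funLeft K K ((↑) : B → X))) := by
  have hrows : range (Matrix.of fun (a : A) (b : B) => g a b).row =
      LinearMap.funLeft K K ((↑) : B → X) '' (g '' A) := by
    rw [image_image, ← Subtype.range_coe (s := (A : Set ι)), ← range_comp]
    rfl
  rw [Matrix.rank_eq_finrank_span_row, hrows, span_image]

theorem iSup_rank_of_eq_toENat_rank_span_range {K ι X : Type*} [Field K] (g : ι → X → K) :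
    (⨆ A : Finset ι, ⨆ B : Finset X,
        ((Matrix.of fun (a : A) (b : B) => g a b).rank : ℕ∞)) =
      Cardinal.toENat (Module.rank K (span K (range g))) := by
  simp_rw [rank_of_eq_finrank_map_funLeft, iSup_finrank_map_funLeft,
    toENat_rank_span_range_eq_iSup_finrank]

open Matrix in
/-- `rank H(f) = dim S(f)` (as extended natural numbers). -/
theorem hankel_rank_eq_dim_shift_invariant_span (s : ℕ) (f : (Fin s → ℤ) → ℂ) :
    (⨆ A : Finset (Fin s → ℤ), ⨆ B : Finset (Fin s → ℤ),
        ((Matrix.rank (Matrix.of fun (a : A) (b : B) => f (a.1 + b.1)) : ℕ∞))) =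
      Cardinal.toENat
        (Module.rank ℂ
          (Submodule.span ℂ (Set.range fun α : Fin s → ℤ => fun x => f (x + α)))) := by
  simpa only [add_comm] using iSup_rank_of_eq_toENat_rank_span_range fun α x => f (x + α)
end

section
/- Let Ω ⊂ ℂ^s be finite with the points e^ω = (e^{ω_1},…,e^{ω_s}) pairwise distinct, and let f(α) = ∑_{ω∈Ω} f_ω e^{ω·α} with all f_ω ∈ ℂ∖{0}. Then rank H(f) = #Ω, i.e., every Hankel matrix H_{A,B}(f) has rank at most #Ω, and there exist finite A, B ⊂ ℕ_0^s with rank H_{A,B}(f) = #Ω. -/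
/-!
The factorization `H_{A,B}(f) = V(A)ᵀ · diag(f_ω) · V(B)` through `Ω` bounds every rank by `#Ω`.
Conversely, the maps `α ↦ (e^ω)^α` are pairwise distinct characters of `ℕ^s`, hence linearly
independent (Dedekind), and since they span a finite-dimensional space their independence is
already witnessed on a finite set `A ⊂ ℕ^s`. Then `V(A)` has full row rank, and so does
`H_{A,A}(f) = V(A)ᵀ · diag(f_ω) · V(A)` because `diag(f_ω)` is invertible.
-/

open Finset Matrix

theorem Submodule.exists_finset_biInf_eq_bot {K V X : Type*} [Field K] [AddCommGroup V]
    [Module K V] [FiniteDimensional K V] (p : X → Submodule K V) (h : ⨅ x, p x = ⊥) :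
    ∃ S : Finset X, ⨅ x ∈ S, p x = ⊥ := by
  -- Submodules of `V` satisfy the descending chain condition, so `⊥` is compact in the dual order.
  have hcompact : IsCompactElement (OrderDual.toDual (⊥ : Submodule K V)) :=
    (CompleteLattice.isSupFiniteCompact_iff_all_elements_compact _).mp
      (CompleteLattice.WellFoundedGT.isSupFiniteCompact _) _
  obtain ⟨S, hS⟩ := CompleteLattice.IsCompactElement.exists_finset_of_le_iSup _ hcompact
    (fun x => OrderDual.toDual (p x)) h.le
  exact ⟨S, le_bot_iff.mp hS⟩

theorem LinearIndependent.exists_finset_restrict {K ι X : Type*} [Field K] [Finite ι]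
    {v : ι → X → K} (hv : LinearIndependent K v) :
    ∃ S : Finset X, LinearIndependent K fun i (x : S) => v i x := by
  cases nonempty_fintype ι
  let p : X → Submodule K (ι → K) := fun x =>
    LinearMap.ker (Fintype.linearCombination K (v · x))
  have mem_p : ∀ c x, c ∈ p x ↔ ∑ i, c i * v i x = 0 := by
    simp [p, Fintype.linearCombination_apply]
  have hp : ⨅ x, p x = ⊥ := by
    refine (Submodule.eq_bot_iff _).mpr fun c hc => ?_
    simp only [Submodule.mem_iInf, mem_p] at hc
    refine funext (Fintype.linearIndependent_iff.mp hv c (funext fun x => ?_))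
    simpa [Finset.sum_apply] using hc x
  obtain ⟨S, hS⟩ := Submodule.exists_finset_biInf_eq_bot p hp
  refine ⟨S, Fintype.linearIndependent_iff.mpr fun c hc => ?_⟩
  have hcS : c ∈ ⨅ x ∈ S, p x := by
    simp only [Submodule.mem_iInf, mem_p]
    intro x hx
    simpa [Finset.sum_apply] using congrFun hc ⟨x, hx⟩
  rw [hS, Submodule.mem_bot] at hcS
  simp [hcS]

noncomputable def monomialHom {K σ : Type*} [CommMonoid K] [Fintype σ] (θ : σ → K) :
    Multiplicative (σ → ℕ) →* K where
  toFun α := ∏ j, θ j ^ Multiplicative.toAdd α j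
  map_one' := by simp
  map_mul' α β := by simp [pow_add, prod_mul_distrib]

theorem monomialHom_single {K σ : Type*} [CommMonoid K] [Fintype σ] [DecidableEq σ]
    (θ : σ → K) (j : σ) : monomialHom θ (Multiplicative.ofAdd (Pi.single j 1)) = θ j := by
  simp [monomialHom, Pi.single_apply]

theorem linearIndependent_prod_pow_of_injective {K σ ι : Type*} [Field K] [Fintype σ]
    {θ : ι → σ → K} (hθ : Function.Injective θ) :
    LinearIndependent K fun i (α : σ → ℕ) => ∏ j, θ i j ^ α j := by
  classical
  have hinj : Function.Injective fun i => monomialHom (θ i) := fun i₁ i₂ h =>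
    hθ <| funext fun j => by
      simpa [monomialHom_single] using DFunLike.congr_fun h (Multiplicative.ofAdd (Pi.single j 1))
  exact (linearIndependent_monoidHom _ K).comp _ hinj

theorem Matrix.rank_mul_eq_left_of_linearIndependent_row {K m n o : Type*} [Field K]
    [Fintype n] [Fintype o] (A : Matrix m n K) {M : Matrix n o K}
    (hM : LinearIndependent K M.row) : (A * M).rank = A.rank := by
  have hsurj : LinearMap.range M.mulVecLin = ⊤ :=
    Submodule.eq_top_of_finrank_eq <| by
      rw [Module.finrank_fintype_fun_eq_card]; exact hM.rank_matrix
  rw [rank, rank, mulVecLin_mul, LinearMap.range_comp_of_range_eq_top _ hsurj]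

theorem Matrix.rank_transpose_mul_diagonal_mul {K m n : Type*} [Field K] [Fintype m]
    [DecidableEq m] [Fintype n] {W : Matrix m n K} (hW : LinearIndependent K W.row)
    {d : m → K} (hd : ∀ i, d i ≠ 0) : (Wᵀ * diagonal d * W).rank = Fintype.card m := by
  have hdet : IsUnit (diagonal d).det := by
    simpa [det_diagonal] using prod_ne_zero_iff.mpr fun i _ => hd i
  rw [rank_mul_eq_left_of_linearIndependent_row _ hW, ← rank_transpose, transpose_mul,
    transpose_transpose, diagonal_transpose, rank_mul_eq_right_of_isUnit_det _ _ hdet,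
    hW.rank_matrix]

/-- The matrix `V(Θ; A) = (θ ^ α)_{θ ∈ Θ, α ∈ A}`, with `Θ` and `A` given as families. -/
noncomputable def multiVandermonde {K ι σ A : Type*} [Field K] [Fintype σ] (θ : ι → σ → K)
    (a : A → σ → ℤ) : Matrix ι A K :=
  of fun i x => ∏ j, θ i j ^ a x j

theorem hankel_eq_multiVandermonde_transpose_mul_diagonal_mul {K ι σ A B : Type*} [Field K]
    [Fintype ι] [DecidableEq ι] [Fintype σ] {θ : ι → σ → K} (hθ : ∀ i j, θ i j ≠ 0) (c : ι → K)
    (a : A → σ → ℤ) (b : B → σ → ℤ) :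
    (of fun x y => ∑ i, c i * ∏ j, θ i j ^ (a x + b y) j : Matrix A B K) =
      (multiVandermonde θ a)ᵀ * diagonal c * multiVandermonde θ b := by
  ext x y
  rw [mul_apply]
  simp only [mul_diagonal, transpose_apply, of_apply, multiVandermonde, Pi.add_apply,
    zpow_add₀ (hθ _ _), prod_mul_distrib]
  exact sum_congr rfl fun i _ => by ring

open Finset in
/-- for a simple exponential sum with nonzero coefficients and
distinct frequencies, `rank H(f) = #Ω`. -/
theorem hankel_rank_simple_exponential (s : ℕ) (Ω : Finset (Fin s → ℂ))
    (hdist : Set.InjOn (fun ω : Fin s → ℂ => fun j => Complex.exp (ω j)) Ω)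
    (fc : (Fin s → ℂ) → ℂ) (hfc : ∀ ω ∈ Ω, fc ω ≠ 0)
    (f : (Fin s → ℤ) → ℂ)
    (hf : ∀ α : Fin s → ℤ, f α = ∑ ω ∈ Ω, fc ω * ∏ j, Complex.exp (ω j) ^ (α j)) :
    (∀ A B : Finset (Fin s → ℤ),
        Matrix.rank (Matrix.of fun (a : A) (b : B) => f (a.1 + b.1)) ≤ Ω.card) ∧
    (∃ A B : Finset (Fin s → ℕ),
        Matrix.rank
            (Matrix.of fun (a : A) (b : B) =>
              f fun j => (a.1 j : ℤ) + (b.1 j : ℤ)) = Ω.card) := by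
  classical
  let θ : Ω → Fin s → ℂ := fun ω j => Complex.exp (ω.1 j)
  have hH {A B : Type} (a : A → Fin s → ℤ) (b : B → Fin s → ℤ) :
      (of fun x y => f (a x + b y) : Matrix A B ℂ) =
        (multiVandermonde θ a)ᵀ * diagonal (fun ω : Ω => fc ω) * multiVandermonde θ b := by
    rw [← hankel_eq_multiVandermonde_transpose_mul_diagonal_mul fun _ _ => Complex.exp_ne_zero _]
    simp only [hf, ← sum_coe_sort Ω]
  constructor
  · intro A B
    rw [hH Subtype.val Subtype.val, ← Fintype.card_coe Ω]
    exact (rank_mul_le_right _ _).trans (rank_le_card_height _)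
  · have hθ : Function.Injective θ := fun ω₁ ω₂ h => Subtype.ext (hdist ω₁.2 ω₂.2 h)
    obtain ⟨S, hS⟩ := (linearIndependent_prod_pow_of_injective hθ).exists_finset_restrict
    refine ⟨S, S, ?_⟩
    set V := multiVandermonde θ fun (x : S) j => (x.1 j : ℤ)
    have hrows : LinearIndependent ℂ V.row := by
      have hrow : V.row = fun ω (x : S) => ∏ j, θ ω j ^ x.1 j := by
        ext ω x
        simp [V, multiVandermonde, row]
      exact hrow ▸ hS
    rw [← Fintype.card_coe Ω, ← rank_transpose_mul_diagonal_mul hrows fun ω => hfc ω ω.2,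
      ← hH]
    rfl
end

section
/- If f : ℤ^s → ℂ has finite Hankel rank, i.e., n := rank H(f) < ∞, then rank H_{Γ_k, Γ_k}(f) = n for all k ≥ n, where Γ_k = {α ∈ ℕ_0^s : |α| ≤ k}; equivalently, the ranks of the square Hankel matrices indexed by total-degree simplices stabilize at rank H(f) once k reaches the rank. -/
/-!
The columns of `H_{A,B}(f)` are the restrictions to `A` of the translates `f(· + b)`, `b ∈ B`,
and a finite-dimensional space of functions restricts injectively to some finite set. Hence
`rank H(f) = n` bounds the dimension of the span `W_k` of the translates over `Γ_k`. The
chain `W_0 ⊆ W_1 ⊆ ⋯` has dimensions between `1` and `n` (for `f ≠ 0`), so `W_{j+1} = W_j`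
for some `j < n`. Since `Γ_j + e_i ⊆ Γ_{j+1}`, `W_j` is then invariant under the unit shifts,
hence, being finite-dimensional, under all of `ℤ^s`; so it contains every translate of `f`. Thus the columns
of any `H_{A,B}(f)` lie in the span of those of `H_{A,Γ_k}(f)`, and by the symmetry of Hankel
matrices `rank H_{A,B}(f) ≤ rank H_{Γ_k,Γ_k}(f)`.
-/

open Submodule Module Matrix

lemma Submodule.exists_finset_injective_funLeft_comp_subtype {K X : Type*} [Field K]
    (W : Submodule K (X → K)) [FiniteDimensional K W] :
    ∃ A : Finset X,
      Function.Injective (LinearMap.funLeft K K (Subtype.val : A → X) ∘ₗ W.subtype) := by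
  obtain ⟨_, ⟨A, rfl⟩, hmin⟩ := IsArtinian.set_has_minimal
    (Set.range fun A : Finset X =>
      LinearMap.ker (LinearMap.funLeft K K (Subtype.val : A → X) ∘ₗ W.subtype))
    (Set.range_nonempty _)
  refine ⟨A, LinearMap.ker_eq_bot.mp (eq_bot_iff.mpr fun w hw => ?_)⟩
  by_contra hw0
  obtain ⟨x, hx⟩ : ∃ x, (w : X → K) x ≠ 0 := by
    by_contra! h
    exact hw0 ((mem_bot K).mpr (Subtype.ext (funext h)))
  classical
  refine hmin _ ⟨insert x A, rfl⟩ (lt_of_le_of_ne (fun v hv => ?_) fun heq => hx ?_)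
  · ext ⟨a, ha⟩
    exact congr_fun hv ⟨a, Finset.mem_insert_of_mem ha⟩
  · exact congr_fun (heq.ge hw) ⟨x, Finset.mem_insert_self x A⟩

lemma Submodule.exists_succ_le_of_finrank_lt {K V : Type*} [Field K] [AddCommGroup V]
    [Module K V] {W : ℕ → Submodule K V} (hW : Monotone W) [∀ k, FiniteDimensional K (W k)]
    {n : ℕ} (h : finrank K (W n) < finrank K (W 0) + n) :
    ∃ j < n, W (j + 1) ≤ W j := by
  induction n with
  | zero => omega
  | succ n ih =>
    by_cases hn : W (n + 1) ≤ W n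
    · exact ⟨n, n.lt_succ_self, hn⟩
    · have := finrank_lt_finrank_of_lt (lt_of_le_not_ge (hW (Nat.le_add_right n 1)) hn)
      obtain ⟨j, hj, hj'⟩ := ih (by omega)
      exact ⟨j, by omega, hj'⟩

lemma AddSubgroup.eq_top_of_single_one_mem {ι : Type*} [Finite ι] [DecidableEq ι]
    (H : AddSubgroup (ι → ℤ)) (h : ∀ i, Pi.single i 1 ∈ H) : H = ⊤ := by
  have hspan : span ℤ (Set.range (Pi.basisFun ℤ ι)) ≤ H.toIntSubmodule :=
    span_le.mpr (by rintro _ ⟨i, rfl⟩; simpa using h i)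
  rw [(Pi.basisFun ℤ ι).span_eq, top_le_iff] at hspan
  exact AddSubgroup.toIntSubmodule.injective (hspan.trans AddSubgroup.toIntSubmodule.map_top.symm)

namespace Hankel

variable {G K : Type*} [AddCommGroup G]

def hankel (f : G → K) (A B : Finset G) : Matrix A B K :=
  Matrix.of fun a b => f (a.1 + b.1)

lemma transpose_hankel (f : G → K) (A B : Finset G) : (hankel f A B)ᵀ = hankel f B A := by
  ext a b
  simp [hankel, add_comm]

variable [Field K]

variable (K) in
def translate (t : G) : (G → K) ≃ₗ[K] (G → K) :=
  LinearEquiv.funCongrLeft K K (Equiv.addRight t)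

@[simp]
lemma translate_apply (t : G) (h : G → K) (x : G) : translate K t h x = h (x + t) := rfl

@[simp]
lemma translate_zero (h : G → K) : translate K 0 h = h := by
  ext x
  simp

lemma translate_translate (a b : G) (h : G → K) :
    translate K a (translate K b h) = translate K (a + b) h := by
  ext x
  simp [add_assoc]

def translateSpan (f : G → K) (B : Set G) : Submodule K (G → K) :=
  span K ((translate K · f) '' B)

lemma translate_mem_translateSpan (f : G → K) {B : Set G} {b : G} (hb : b ∈ B) :
    translate K b f ∈ translateSpan f B :=
  subset_span ⟨b, hb, rfl⟩

lemma translateSpan_mono (f : G → K) {B C : Set G} (h : B ⊆ C) :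
    translateSpan f B ≤ translateSpan f C :=
  span_mono (Set.image_mono h)

lemma map_translate_translateSpan (f : G → K) (t : G) (B : Set G) :
    (translateSpan f B).map (translate K t).toLinearMap = translateSpan f ((· + t) '' B) := by
  rw [translateSpan, translateSpan, map_span, Set.image_image, Set.image_image]
  refine congrArg (span K) (Set.image_congr fun b _ => ?_)
  rw [LinearEquiv.coe_coe, translate_translate, add_comm]

instance (f : G → K) (B : Finset G) : FiniteDimensional K (translateSpan f B) :=
  FiniteDimensional.span_of_finite K (B.finite_toSet.image _)

lemma rank_hankel (f : G → K) (A B : Finset G) :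
    (hankel f A B).rank =
      finrank K ((translateSpan f B).map (LinearMap.funLeft K K (Subtype.val : A → G))) := by
  have hcols : Set.range (hankel f A B).col =
      LinearMap.funLeft K K (Subtype.val : A → G) '' ((translate K · f) '' B) := by
    ext v
    constructor
    · rintro ⟨b, rfl⟩
      exact ⟨_, ⟨b, b.2, rfl⟩, rfl⟩
    · rintro ⟨_, ⟨b, hb, rfl⟩, rfl⟩
      exact ⟨⟨b, hb⟩, rfl⟩
  rw [Matrix.rank_eq_finrank_span_cols, hcols, ← map_span]
  rfl

lemma rank_hankel_le_of_translateSpan_le (f : G → K) (A : Finset G) {B C : Finset G}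
    (h : translateSpan f B ≤ translateSpan f C) :
    (hankel f A B).rank ≤ (hankel f A C).rank := by
  rw [rank_hankel, rank_hankel]
  exact finrank_mono (map_mono h)

lemma rank_hankel_le_of_forall_translate_mem (f : G → K) (A B : Finset G) {C : Finset G}
    (hC : ∀ t, translate K t f ∈ translateSpan f C) :
    (hankel f A B).rank ≤ (hankel f C C).rank := by
  have hle (D : Finset G) : translateSpan f D ≤ translateSpan f C :=
    span_le.mpr (by rintro _ ⟨t, -, rfl⟩; exact hC t)
  calc (hankel f A B).rank ≤ (hankel f A C).rank := rank_hankel_le_of_translateSpan_le f A (hle B)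
    _ = (hankel f C A).rank := by rw [← transpose_hankel, rank_transpose]
    _ ≤ (hankel f C C).rank := rank_hankel_le_of_translateSpan_le f C (hle A)

lemma finrank_translateSpan_le (f : G → K) {n : ℕ} (hn : ∀ A B, (hankel f A B).rank ≤ n)
    (B : Finset G) : finrank K (translateSpan f B) ≤ n := by
  obtain ⟨A, hA⟩ := (translateSpan f B).exists_finset_injective_funLeft_comp_subtype
  calc finrank K (translateSpan f B)
      = finrank K (LinearMap.range (LinearMap.funLeft K K (Subtype.val : A → G) ∘ₗ
          (translateSpan f B).subtype)) := (LinearMap.finrank_range_of_inj hA).symm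
    _ = (hankel f A B).rank := by rw [rank_hankel, LinearMap.range_comp, range_subtype]
    _ ≤ n := hn A B

/-- Closed under negation because a translation mapping the finite-dimensional `W` into itself
maps it onto `W`. -/
def translationStabilizer (W : Submodule K (G → K)) [FiniteDimensional K W] : AddSubgroup G where
  carrier := {t | ∀ w ∈ W, translate K t w ∈ W}
  zero_mem' w hw := by simpa using hw
  add_mem' {a b} ha hb w hw := by
    rw [← translate_translate]
    exact ha _ (hb w hw)
  neg_mem' {t} ht w hw := by
    have hmap : W.map (translate K t).toLinearMap = W :=
      eq_of_le_of_finrank_le (map_le_iff_le_comap.mpr fun w hw => ht w hw)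
        (LinearEquiv.finrank_map_eq _ _).ge
    rw [← hmap] at hw
    obtain ⟨v, hv, rfl⟩ := hw
    rwa [LinearEquiv.coe_coe, translate_translate, neg_add_cancel, translate_zero]

noncomputable def simplex (s k : ℕ) : Finset (Fin s → ℤ) :=
  (Fintype.piFinset fun _ => Finset.Icc 0 (k : ℤ)).filter fun α => ∑ j, α j ≤ k

lemma mem_simplex {s k : ℕ} {α : Fin s → ℤ} :
    α ∈ simplex s k ↔ (∀ j, 0 ≤ α j) ∧ ∑ j, α j ≤ k := by
  simp only [simplex, Finset.mem_filter, Fintype.mem_piFinset, Finset.mem_Icc]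
  refine ⟨fun h => ⟨fun j => (h.1 j).1, h.2⟩, fun h => ⟨fun j => ⟨h.1 j, ?_⟩, h.2⟩⟩
  exact (Finset.single_le_sum (fun i _ => h.1 i) (Finset.mem_univ j)).trans h.2

lemma simplex_mono (s : ℕ) : Monotone (simplex s) := fun _ _ hkm _ hα =>
  mem_simplex.mpr ⟨(mem_simplex.mp hα).1, (mem_simplex.mp hα).2.trans (by exact_mod_cast hkm)⟩

lemma zero_mem_simplex (s k : ℕ) : (0 : Fin s → ℤ) ∈ simplex s k :=
  mem_simplex.mpr ⟨fun _ => le_rfl, by simp⟩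

lemma add_single_mem_simplex {s k : ℕ} {α : Fin s → ℤ} (hα : α ∈ simplex s k) (i : Fin s) :
    α + Pi.single i 1 ∈ simplex s (k + 1) := by
  obtain ⟨hpos, hsum⟩ := mem_simplex.mp hα
  refine mem_simplex.mpr ⟨fun j => add_nonneg (hpos j) ?_, ?_⟩
  · by_cases hij : j = i
    · subst hij; simp
    · simp [Pi.single_eq_of_ne hij]
  · simp only [Pi.add_apply, Finset.sum_add_distrib, Finset.sum_pi_single', Finset.mem_univ,
      if_true]
    push_cast
    linarith

lemma translate_single_mem_translateSpan_simplex_succ {s k : ℕ} (f : (Fin s → ℤ) → K)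
    (i : Fin s) {w : (Fin s → ℤ) → K} (hw : w ∈ translateSpan f (simplex s k)) :
    translate K (Pi.single i 1) w ∈ translateSpan f (simplex s (k + 1)) := by
  refine translateSpan_mono f ?_
    (map_translate_translateSpan f (Pi.single i 1) _ ▸ mem_map_of_mem hw)
  rintro _ ⟨α, hα, rfl⟩
  exact add_single_mem_simplex hα i

lemma translate_mem_translateSpan_simplex {s : ℕ} (f : (Fin s → ℤ) → K) {n k : ℕ}
    (hn : ∀ A B, (hankel f A B).rank ≤ n) (hk : n ≤ k) (t : Fin s → ℤ) :
    translate K t f ∈ translateSpan f (simplex s k) := by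
  rcases eq_or_ne f 0 with rfl | hf
  · simp
  set W : ℕ → Submodule K ((Fin s → ℤ) → K) := fun k => translateSpan f (simplex s k)
  have hW : Monotone W := fun _ _ h =>
    translateSpan_mono f (Finset.coe_subset.mpr (simplex_mono s h))
  have hf0 : f ∈ W 0 := by simpa using translate_mem_translateSpan f (zero_mem_simplex s 0)
  have hW0 : 0 < finrank K (W 0) :=
    finrank_pos_iff_exists_ne_zero.mpr ⟨⟨f, hf0⟩, by simpa using hf⟩
  obtain ⟨j, hjn, hj⟩ := exists_succ_le_of_finrank_lt hW (n := n)
    (by have : finrank K (W n) ≤ n := finrank_translateSpan_le f hn _; omega)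
  have hstab : translationStabilizer (W j) = ⊤ :=
    AddSubgroup.eq_top_of_single_one_mem _ fun i w hw =>
      hj (translate_single_mem_translateSpan_simplex_succ f i hw)
  have ht : t ∈ translationStabilizer (W j) := hstab ▸ AddSubgroup.mem_top t
  have hfj : translate K t f ∈ W j := ht f (hW (Nat.zero_le j) hf0)
  exact hW (by omega) hfj

end Hankel

open Finset in
/-- if `rank H(f) = n < ∞` then the square Hankel matrices over the
total-degree simplices `Γ_k` have rank `n` for all `k ≥ n`. -/
theorem hankel_rank_stabilizes (s : ℕ) (f : (Fin s → ℤ) → ℂ) (n : ℕ)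
    (hrank : (⨆ A : Finset (Fin s → ℤ), ⨆ B : Finset (Fin s → ℤ),
        ((Matrix.rank (Matrix.of fun (a : A) (b : B) => f (a.1 + b.1)) : ℕ∞))) = n) :
    ∀ k : ℕ, n ≤ k →
      ∀ Γ : Finset (Fin s → ℤ),
        (∀ α : Fin s → ℤ,
            α ∈ Γ ↔ (∀ j, 0 ≤ α j) ∧ (∑ j, α j) ≤ (k : ℤ)) →
        Matrix.rank (Matrix.of fun (a : Γ) (b : Γ) => f (a.1 + b.1)) = n := by
  intro k hk Γ hΓ
  obtain rfl : Γ = Hankel.simplex s k :=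
    Finset.ext fun α => (hΓ α).trans Hankel.mem_simplex.symm
  have hn (A B : Finset (Fin s → ℤ)) : (Hankel.hankel f A B).rank ≤ n := by
    exact_mod_cast hrank ▸
      le_iSup₂ (f := fun A B : Finset _ => ((Hankel.hankel f A B).rank : ℕ∞)) A B
  refine le_antisymm (hn _ _) ?_
  have : (n : ℕ∞) ≤ (Hankel.hankel f _ _).rank := hrank ▸ iSup₂_le fun A B => by
    exact_mod_cast Hankel.rank_hankel_le_of_forall_translate_mem f A B
      (Hankel.translate_mem_translateSpan_simplex f hn hk)
  exact_mod_cast this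
end

section
/- A finite dimensional subspace Q of ℂ[x_1,…,x_s] is shift invariant (closed under all translations f ↦ f(·+e_j)) if and only if its image LQ under the operator L f = ∑_α (1/α!)((τ-I)^α f)(0) x^α is D-invariant, i.e., closed under all partial derivatives ∂/∂x_j. -/
/-!
Write `Δ_j = τ_j - 1`. Since `Δ_j` lowers the total degree, `Δ^α f = 0` once `|α| > deg f`, so
the sum defining `L f` is finite. Comparing coefficients, `∂_j ∘ L = L ∘ Δ_j`: both sides reduce to
`Δ^(α + e_j) = Δ^α Δ_j` and `(α + e_j)! = (α_j + 1) α!`. Moreover `L` is injective: if every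
`(Δ^α f)(0)` vanishes, then so does every `(Δ^α τ_j f)(0)`, hence `f` vanishes on `ℕ^s` and is
therefore zero. As `τ_j = 1 + Δ_j`, closure of `Q` under `τ_j` is closure under `Δ_j`, which `L`
turns into closure of `LQ` under `∂_j`.
-/

open MvPolynomial Finsupp Nat

namespace Finsupp

@[elab_as_elim]
theorem induction_add_single_one {ι : Type*} {motive : (ι →₀ ℕ) → Prop} (α : ι →₀ ℕ)
    (zero : motive 0) (add_single_one : ∀ α i, motive α → motive (α + single i 1)) :
    motive α := by
  induction α using Finsupp.induction₂ with
  | zero => exact zero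
  | add_single i n α _ _ hα =>
    clear * - hα add_single_one
    induction n with
    | zero => simpa using hα
    | succ n ih => simpa [single_add, add_assoc] using add_single_one _ i ih

theorem prod_factorial_add_single_one {ι : Type*} [Fintype ι] (γ : ι →₀ ℕ) (j : ι) :
    ∏ i, ((γ + single j 1 : ι →₀ ℕ) i)! = (γ j + 1) * ∏ i, (γ i)! := by
  classical
  rw [← Finset.mul_prod_erase _ _ (Finset.mem_univ j),
    ← Finset.mul_prod_erase _ (fun i => (γ i)!) (Finset.mem_univ j), ← mul_assoc]
  congr 1
  · rw [add_apply, single_eq_same, Nat.factorial_succ]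
  · refine Finset.prod_congr rfl fun i hi => ?_
    rw [add_apply, single_eq_of_ne (Finset.ne_of_mem_erase hi), add_zero]

end Finsupp

namespace MvPolynomial

section Shift

theorem totalDegree_X_pow_le {R σ : Type*} [CommSemiring R] (i : σ) (n : ℕ) :
    (X i ^ n : MvPolynomial σ R).totalDegree ≤ n := by
  rw [X_pow_eq_monomial]
  exact (totalDegree_monomial_le _ _).trans (by simp)

variable {R σ : Type*} [CommRing R]

theorem totalDegree_X_add_one_pow_sub_le (i : σ) (n : ℕ) :
    ((X i + 1) ^ n - X i ^ n : MvPolynomial σ R).totalDegree ≤ n - 1 := by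
  rw [add_pow, Finset.sum_range_succ, one_pow, mul_one, Nat.choose_self, Nat.cast_one, mul_one,
    add_sub_cancel_right]
  refine totalDegree_finsetSum_le fun m hm => ?_
  rw [one_pow, mul_one, ← map_natCast C]
  refine (totalDegree_mul _ _).trans ?_
  rw [totalDegree_C, add_zero]
  exact (totalDegree_X_pow_le i m).trans (Nat.le_sub_one_of_lt (Finset.mem_range.1 hm))

variable [DecidableEq σ]

noncomputable def shift (j : σ) : MvPolynomial σ R →ₐ[R] MvPolynomial σ R :=
  aeval fun i => X i + if i = j then 1 else 0

noncomputable def forwardDiff (j : σ) : Module.End R (MvPolynomial σ R) :=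
  (shift j).toLinearMap - 1

theorem forwardDiff_apply (j : σ) (g : MvPolynomial σ R) : forwardDiff j g = shift j g - g :=
  rfl

theorem eval_shift (j : σ) (x : σ → R) (g : MvPolynomial σ R) :
    eval x (shift j g) = eval (x + Pi.single j 1) g := by
  induction g using MvPolynomial.induction_on with
  | C a => simp [shift]
  | add p q hp hq => simp [hp, hq]
  | mul_X p i hp =>
    rw [map_mul, map_mul, hp]
    simp [shift, Pi.single_apply]

theorem shift_comp_comm (i j : σ) :
    (shift i).comp (shift j) = ((shift j).comp (shift i) : MvPolynomial σ R →ₐ[R] _) := by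
  refine algHom_ext fun k => ?_
  simp only [shift, AlgHom.comp_apply, aeval_X, map_add, apply_ite (aeval _), map_one, map_zero]
  ring

theorem commute_forwardDiff (i j : σ) :
    Commute (forwardDiff i : Module.End R (MvPolynomial σ R)) (forwardDiff j) := by
  have : Commute (shift i : MvPolynomial σ R →ₐ[R] _).toLinearMap (shift j).toLinearMap :=
    congrArg AlgHom.toLinearMap (shift_comp_comm i j)
  exact (this.sub_left (Commute.one_left _)).sub_right
    ((Commute.one_right _).sub_left (Commute.one_left _))

theorem forwardDiff_eq_zero_of_totalDegree_eq_zero {g : MvPolynomial σ R} (j : σ)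
    (h : g.totalDegree = 0) : forwardDiff j g = 0 := by
  rw [totalDegree_eq_zero_iff_eq_C] at h
  rw [forwardDiff_apply, h, shift, aeval_C, algebraMap_eq, sub_self]

theorem totalDegree_forwardDiff_monomial_le [Fintype σ] (j : σ) (β : σ →₀ ℕ) (c : R) :
    (forwardDiff j (monomial β c)).totalDegree ≤ degree β - 1 := by
  set P := ∏ i ∈ Finset.univ.erase j, (X i ^ β i : MvPolynomial σ R) with hP
  have hmon : monomial β c = C c * (X j ^ β j * P) := by
    rw [monomial_eq, Finsupp.prod_fintype _ _ fun _ => pow_zero _]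
    exact congrArg _ (Finset.mul_prod_erase _ _ (Finset.mem_univ j)).symm
  have hPfix : shift j P = P := by
    rw [hP, map_prod]
    refine Finset.prod_congr rfl fun i hi => ?_
    rw [map_pow, shift, aeval_X, if_neg (Finset.ne_of_mem_erase hi), add_zero]
  have hdiff : forwardDiff j (monomial β c) = C c * (((X j + 1) ^ β j - X j ^ β j) * P) := by
    rw [forwardDiff_apply, hmon, map_mul, map_mul, map_pow, hPfix, shift, aeval_C, algebraMap_eq,
      aeval_X, if_pos rfl]
    ring
  rw [hdiff]
  rcases (β j).eq_zero_or_pos with hzero | hpos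
  · simp [hzero]
  have hP_le : P.totalDegree ≤ ∑ i ∈ Finset.univ.erase j, β i :=
    (totalDegree_finsetProd _ _).trans (Finset.sum_le_sum fun i _ => totalDegree_X_pow_le i (β i))
  have hdeg : degree β = β j + ∑ i ∈ Finset.univ.erase j, β i := by
    rw [degree_eq_sum, Finset.add_sum_erase _ _ (Finset.mem_univ j)]
  have hD_le := totalDegree_X_add_one_pow_sub_le (R := R) j (β j)
  calc (C c * (((X j + 1) ^ β j - X j ^ β j) * P)).totalDegree
      ≤ (C c : MvPolynomial σ R).totalDegree +
          (((X j + 1 : MvPolynomial σ R) ^ β j - X j ^ β j).totalDegree + P.totalDegree) :=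
        (totalDegree_mul _ _).trans (Nat.add_le_add_left (totalDegree_mul _ _) _)
    _ ≤ degree β - 1 := by
        rw [totalDegree_C]
        omega

theorem totalDegree_forwardDiff_le [Fintype σ] (j : σ) (g : MvPolynomial σ R) :
    (forwardDiff j g).totalDegree ≤ g.totalDegree - 1 := by
  conv_lhs => rw [g.as_sum, map_sum]
  exact totalDegree_finsetSum_le fun β hβ =>
    (totalDegree_forwardDiff_monomial_le j β _).trans (Nat.sub_le_sub_right (le_totalDegree hβ) 1)

end Shift

section DiffPow

variable {R : Type*} [CommRing R] {s : ℕ}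

noncomputable def forwardDiffPow (α : Fin s →₀ ℕ) : Module.End R (MvPolynomial (Fin s) R) :=
  ((List.finRange s).map fun j => forwardDiff j ^ α j).prod

theorem pairwise_commute_forwardDiff_pow (e : Fin s → ℕ) (t : Set (Fin s)) :
    t.Pairwise (Function.onFun Commute fun j =>
      (forwardDiff j : Module.End R (MvPolynomial (Fin s) R)) ^ e j) :=
  fun i _ k _ _ => (commute_forwardDiff i k).pow_pow _ _

theorem forwardDiffPow_eq_noncommProd (α : Fin s →₀ ℕ) :
    (forwardDiffPow α : Module.End R _) = Finset.univ.noncommProd (fun j => forwardDiff j ^ α j)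
      (pairwise_commute_forwardDiff_pow α _) := by
  simp only [forwardDiffPow, Finset.noncommProd, Fin.univ_val_map, Multiset.noncommProd_coe,
    List.ofFn_eq_map]

theorem forwardDiffPow_zero : (forwardDiffPow 0 : Module.End R (MvPolynomial (Fin s) R)) = 1 := by
  simp [forwardDiffPow]

theorem forwardDiffPow_add_single_one (α : Fin s →₀ ℕ) (j : Fin s) :
    (forwardDiffPow (α + single j 1) : Module.End R _) = forwardDiffPow α * forwardDiff j := by
  have hsingle : Finset.univ.noncommProd (fun i => forwardDiff i ^ single j 1 i)
      (pairwise_commute_forwardDiff_pow _ _) =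
      (forwardDiff j : Module.End R (MvPolynomial (Fin s) R)) := by
    rw [← Finset.noncommProd_erase_mul _ (Finset.mem_univ j), single_eq_same, pow_one]
    convert one_mul _
    refine (Finset.noncommProd_eq_pow_card _ _ _ 1 fun i hi => ?_).trans (one_pow _)
    rw [single_eq_of_ne (Finset.ne_of_mem_erase hi), pow_zero]
  rw [forwardDiffPow_eq_noncommProd, forwardDiffPow_eq_noncommProd, ← hsingle,
    ← Finset.noncommProd_mul_distrib]
  · exact Finset.noncommProd_congr rfl
      (fun i _ => by rw [Finsupp.add_apply, pow_add, Pi.mul_apply]) _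
  · exact fun i _ k _ _ => (commute_forwardDiff i k).pow_pow _ _

theorem forwardDiffPow_eq_zero_of_totalDegree_lt {α : Fin s →₀ ℕ} {g : MvPolynomial (Fin s) R}
    (h : g.totalDegree < degree α) : forwardDiffPow α g = 0 := by
  induction α using Finsupp.induction_add_single_one generalizing g with
  | zero => simp at h
  | add_single_one α j ih =>
    rw [forwardDiffPow_add_single_one, Module.End.mul_apply]
    rcases Nat.eq_zero_or_pos g.totalDegree with h0 | hpos
    · rw [forwardDiff_eq_zero_of_totalDegree_eq_zero j h0, map_zero]
    · apply ih
      have := totalDegree_forwardDiff_le j g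
      rw [map_add, degree_single] at h
      omega

theorem eval_natCast_eq_zero_of_forall_eval_forwardDiffPow_eq_zero {g : MvPolynomial (Fin s) R}
    (h : ∀ α, eval 0 (forwardDiffPow α g) = 0) (x : Fin s →₀ ℕ) :
    eval (fun i => (x i : R)) g = 0 := by
  induction x using Finsupp.induction_add_single_one generalizing g with
  | zero => simpa [forwardDiffPow_zero] using h 0
  | add_single_one x j ih =>
    have hshift : ∀ α, eval 0 (forwardDiffPow α (shift j g)) = 0 := fun α => by
      rw [← sub_add_cancel (shift j g) g, ← forwardDiff_apply, map_add, ← Module.End.mul_apply,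
        ← forwardDiffPow_add_single_one, map_add, h, h, add_zero]
    convert ih hshift using 1
    rw [eval_shift]
    congr 2
    funext i
    simp [Pi.single_apply, single_apply, eq_comm]

theorem eq_zero_of_forall_eval_forwardDiffPow_eq_zero [IsDomain R] [CharZero R]
    {g : MvPolynomial (Fin s) R} (h : ∀ α, eval 0 (forwardDiffPow α g) = 0) : g = 0 := by
  classical
  refine eq_zero_of_eval_zero_at_prod_finset g
    (fun i => (Finset.range (g.degreeOf i + 1)).image (Nat.cast : ℕ → R)) (fun i => ?_)
    (fun x hx => ?_)
  · rw [Finset.card_image_of_injective _ Nat.cast_injective, Finset.card_range]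
    exact Nat.lt_succ_self _
  · choose n hn using fun i => Finset.mem_image.1 (hx i)
    have hx : x = fun i => ((Finsupp.equivFunOnFinite.symm n) i : R) := by
      funext i
      simp [(hn i).2]
    rw [hx]
    exact eval_natCast_eq_zero_of_forall_eval_forwardDiffPow_eq_zero h _

end DiffPow

section Taylor

variable {K : Type*} [Field K] {s : ℕ}

/-- The operator `L` of the statement. -/
noncomputable def forwardDiffTaylor (f : MvPolynomial (Fin s) K) : MvPolynomial (Fin s) K :=
  ∑ᶠ α : Fin s →₀ ℕ, (eval 0 (forwardDiffPow α f) / ∏ j, ((α j)! : K)) • monomial α (1 : K)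

theorem coeff_forwardDiffTaylor (f : MvPolynomial (Fin s) K) (γ : Fin s →₀ ℕ) :
    coeff γ (forwardDiffTaylor f) = eval 0 (forwardDiffPow γ f) / ∏ j, ((γ j)! : K) := by
  have hfin : Function.HasFiniteSupport fun α : Fin s →₀ ℕ =>
      (eval 0 (forwardDiffPow α f) / ∏ j, ((α j)! : K)) • monomial α (1 : K) := by
    refine (finite_of_degree_le f.totalDegree).subset fun α hα => ?_
    by_contra hlt
    rw [Function.mem_support, forwardDiffPow_eq_zero_of_totalDegree_lt (not_le.1 hlt), map_zero,
      zero_div, zero_smul] at hα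
    exact hα rfl
  change lcoeff K γ _ = _
  rw [forwardDiffTaylor, map_finsum _ hfin, finsum_eq_single _ γ]
  · simp
  · intro α hα
    simp [coeff_monomial, hα]

theorem pderiv_forwardDiffTaylor [CharZero K] (j : Fin s) (f : MvPolynomial (Fin s) K) :
    pderiv j (forwardDiffTaylor f) = forwardDiffTaylor (forwardDiff j f) := by
  ext γ
  have hfact := congrArg (Nat.cast : ℕ → K) (prod_factorial_add_single_one γ j)
  simp only [Nat.cast_prod, Nat.cast_mul, Nat.cast_add, Nat.cast_one] at hfact
  rw [coeff_pderiv, coeff_forwardDiffTaylor, coeff_forwardDiffTaylor, hfact,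
    forwardDiffPow_add_single_one, Module.End.mul_apply]
  field_simp

theorem forwardDiffTaylor_injective [CharZero K] :
    Function.Injective (forwardDiffTaylor : MvPolynomial (Fin s) K → MvPolynomial (Fin s) K) := by
  intro f g hfg
  rw [← sub_eq_zero]
  refine eq_zero_of_forall_eval_forwardDiffPow_eq_zero fun α => ?_
  have hcoeff := congrArg (coeff α) hfg
  rw [coeff_forwardDiffTaylor, coeff_forwardDiffTaylor,
    div_left_inj' (Finset.prod_ne_zero_iff.2 fun j _ => Nat.cast_ne_zero.2 (factorial_ne_zero _))]
    at hcoeff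
  rw [map_sub, map_sub, hcoeff, sub_self]

theorem forall_shift_mem_iff_forall_pderiv_mem_image [CharZero K]
    (Q : Submodule K (MvPolynomial (Fin s) K)) :
    (∀ q ∈ Q, ∀ j, shift j q ∈ Q) ↔
      ∀ p ∈ forwardDiffTaylor '' (Q : Set (MvPolynomial (Fin s) K)), ∀ j,
        pderiv j p ∈ forwardDiffTaylor '' (Q : Set (MvPolynomial (Fin s) K)) := by
  constructor
  · rintro hQ _ ⟨q, hq, rfl⟩ j
    rw [pderiv_forwardDiffTaylor]
    exact ⟨_, Q.sub_mem (hQ q hq j) hq, rfl⟩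
  · intro hLQ q hq j
    obtain ⟨r, hr, hrq⟩ := hLQ _ ⟨q, hq, rfl⟩ j
    rw [pderiv_forwardDiffTaylor] at hrq
    rw [forwardDiffTaylor_injective hrq, forwardDiff_apply] at hr
    simpa using Q.add_mem hr hq

end Taylor

end MvPolynomial

open MvPolynomial Finset in
theorem shift_invariant_iff_image_D_invariant_general (s : ℕ)
    (Q : Submodule ℂ (MvPolynomial (Fin s) ℂ)) :
    let shiftP : Fin s → MvPolynomial (Fin s) ℂ → MvPolynomial (Fin s) ℂ :=
      fun j => MvPolynomial.aeval fun i =>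
        (MvPolynomial.X i : MvPolynomial (Fin s) ℂ) + if i = j then 1 else 0
    let τ : Fin s → Module.End ℂ (MvPolynomial (Fin s) ℂ) := fun j =>
      (MvPolynomial.aeval fun i =>
        (MvPolynomial.X i : MvPolynomial (Fin s) ℂ) +
          if i = j then 1 else 0).toLinearMap
    let Δpow : (Fin s →₀ ℕ) → Module.End ℂ (MvPolynomial (Fin s) ℂ) := fun α =>
      (((List.finRange s).map fun j => (τ j - 1) ^ (α j)).prod)
    let fact : (Fin s →₀ ℕ) → ℂ := fun α => ∏ j, (Nat.factorial (α j) : ℂ)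
    let L : MvPolynomial (Fin s) ℂ → MvPolynomial (Fin s) ℂ := fun f =>
      ∑ᶠ α : Fin s →₀ ℕ,
        (MvPolynomial.eval 0 (Δpow α f) / fact α) • MvPolynomial.monomial α (1 : ℂ)
    (∀ q ∈ Q, ∀ j : Fin s, shiftP j q ∈ Q) ↔
      (∀ p ∈ L '' (Q : Set (MvPolynomial (Fin s) ℂ)), ∀ j : Fin s,
        MvPolynomial.pderiv j p ∈ L '' (Q : Set (MvPolynomial (Fin s) ℂ))) :=
  forall_shift_mem_iff_forall_pderiv_mem_image Q

open MvPolynomial Finset in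
/-- a finite dimensional polynomial subspace `Q` is shift invariant
iff its image `LQ` under `L f = ∑_α ((τ-I)^α f)(0)/α! · x^α` is D-invariant. -/
theorem shift_invariant_iff_image_D_invariant (s : ℕ)
    (Q : Submodule ℂ (MvPolynomial (Fin s) ℂ)) (hQ : FiniteDimensional ℂ Q) :
    let shiftP : Fin s → MvPolynomial (Fin s) ℂ → MvPolynomial (Fin s) ℂ :=
      fun j => MvPolynomial.aeval fun i =>
        (MvPolynomial.X i : MvPolynomial (Fin s) ℂ) + if i = j then 1 else 0
    let τ : Fin s → Module.End ℂ (MvPolynomial (Fin s) ℂ) := fun j =>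
      (MvPolynomial.aeval fun i =>
        (MvPolynomial.X i : MvPolynomial (Fin s) ℂ) +
          if i = j then 1 else 0).toLinearMap
    let Δpow : (Fin s →₀ ℕ) → Module.End ℂ (MvPolynomial (Fin s) ℂ) := fun α =>
      (((List.finRange s).map fun j => (τ j - 1) ^ (α j)).prod)
    let fact : (Fin s →₀ ℕ) → ℂ := fun α => ∏ j, (Nat.factorial (α j) : ℂ)
    let L : MvPolynomial (Fin s) ℂ → MvPolynomial (Fin s) ℂ := fun f =>
      ∑ᶠ α : Fin s →₀ ℕ,
        (MvPolynomial.eval 0 (Δpow α f) / fact α) • MvPolynomial.monomial α (1 : ℂ)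
    (∀ q ∈ Q, ∀ j : Fin s, shiftP j q ∈ Q) ↔
      (∀ p ∈ L '' (Q : Set (MvPolynomial (Fin s) ℂ)), ∀ j : Fin s,
        MvPolynomial.pderiv j p ∈ L '' (Q : Set (MvPolynomial (Fin s) ℂ))) :=
  shift_invariant_iff_image_D_invariant_general s Q
end

section
/- Let Θ ⊂ (ℂ∖{0})^s be a finite set of n distinct points. Then the hyperbolic cross index set Υ_n = {α ∈ ℕ_0^s : ∏_{j=1}^s (1+α_j) ≤ n} admits interpolation at Θ: the Vandermonde matrix V(Θ; Υ_n) = (θ^α)_{θ∈Θ, α∈Υ_n} has full row rank n. -/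
/-!
Split `Θ` into fibres of the first coordinate; they have `k` distinct first coordinates, and by
pigeonhole the smallest fibre, over `c`, has `m` points with `k * m ≤ n`. By induction on `#Θ`
interpolate on the other `n - m` points with a polynomial `q`. Then correct on the fibre by
`g(x₁) * r(x₂, …, xₛ)`, where `g` is the Lagrange polynomial of degree `k - 1` with `g(c) = 1`
vanishing at the other first coordinates, and `r`, by induction on `s`, interpolates the residual
`y - q` on the `m` projected fibre points. Every monomial of `g * r` has weight
`∏ (1 + αⱼ) ≤ k * m ≤ n`. Evaluation on this hyperbolic cross is thus onto `ℂ^Θ`.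
-/

open MvPolynomial Finset
open scoped Matrix

theorem Finset.exists_card_mul_card_fiber_le {α β : Type*} [DecidableEq β] (s : Finset α)
    {t : Finset β} (f : α → β) (ht : t.Nonempty) :
    ∃ y ∈ t, #t * #{x ∈ s | f x = y} ≤ #s := by
  have ht₀ : (0 : ℚ) < #t := by exact_mod_cast ht.card_pos
  obtain ⟨y, hy, hle⟩ := exists_card_fiber_le_of_card_le_nsmul (f := f) (s := s) ht
    (b := (#s / #t : ℚ)) (by rw [nsmul_eq_mul, mul_div_cancel₀ _ ht₀.ne'])
  refine ⟨y, hy, ?_⟩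
  rw [le_div_iff₀ ht₀] at hle
  exact_mod_cast (mul_comm (#t : ℚ) _ ▸ hle)

theorem exists_lagrange_basis_of_notMem {σ K : Type*} [Field K] (i : σ) (W : Finset K) {c : K}
    (hc : c ∉ W) :
    ∃ g : MvPolynomial σ K, (∀ d ∈ g.support, d i ≤ #W ∧ ∀ j ≠ i, d j = 0) ∧
      (∀ x : σ → K, x i ∈ W → eval x g = 0) ∧ ∀ x : σ → K, x i = c → eval x g = 1 := by
  classical
  have hG : ∏ w ∈ W, (c - w) ≠ 0 :=
    prod_ne_zero_iff.2 fun w hw => sub_ne_zero.2 (ne_of_mem_of_not_mem hw hc).symm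
  set g : MvPolynomial σ K := C (∏ w ∈ W, (c - w))⁻¹ * ∏ w ∈ W, (X i - C w)
  have hvars : g ∈ supported K {i} :=
    Subalgebra.mul_mem _ (Subalgebra.algebraMap_mem _ _) (Subalgebra.prod_mem _ fun w _ =>
      Subalgebra.sub_mem _ (X_mem_supported.2 rfl) (Subalgebra.algebraMap_mem _ _))
  have hdeg : g.degreeOf i ≤ #W := by
    calc g.degreeOf i ≤ (C (∏ w ∈ W, (c - w))⁻¹ : MvPolynomial σ K).degreeOf i
          + (∏ w ∈ W, (X i - C w) : MvPolynomial σ K).degreeOf i := degreeOf_mul_le _ _ _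
      _ ≤ 0 + ∑ w ∈ W, 1 := by
          rw [degreeOf_C]
          refine add_le_add le_rfl ((degreeOf_prod_le _ _ _).trans (sum_le_sum fun w _ => ?_))
          refine (degreeOf_sub_le _ _ _).trans (max_le ?_ ((degreeOf_C _ _).trans_le zero_le_one))
          exact (degreeOf_X i i).le.trans (by simp)
      _ = #W := by simp
  refine ⟨g, fun d hd => ⟨(monomial_le_degreeOf i hd).trans hdeg, fun j hj => ?_⟩, fun x hx => ?_,
    fun x hx => ?_⟩
  · by_contra hdj
    have : j ∈ g.vars := (mem_vars_iff_mem_support j).2 ⟨d, hd, Finsupp.mem_support_iff.2 hdj⟩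
    exact hj (by simpa using mem_supported.1 hvars this)
  · simp [g, map_prod, prod_eq_zero hx (sub_self _)]
  · simp [g, map_prod, hx, hG]

def hyperbolicCross (s n : ℕ) : Set (Fin s →₀ ℕ) := {d | ∏ j, (1 + d j) ≤ n}

theorem hyperbolicCross_mono {s m n : ℕ} (h : m ≤ n) : hyperbolicCross s m ⊆ hyperbolicCross s n :=
  fun _ hd => le_trans hd h

theorem mul_rename_succ_mem_restrictSupport_hyperbolicCross {K : Type*} [CommSemiring K]
    {s k m : ℕ} {g : MvPolynomial (Fin (s + 1)) K} {r : MvPolynomial (Fin s) K}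
    (hg : ∀ d ∈ g.support, d 0 ≤ k ∧ ∀ j ≠ 0, d j = 0)
    (hr : r ∈ restrictSupport K (hyperbolicCross s m)) :
    g * rename Fin.succ r ∈ restrictSupport K (hyperbolicCross (s + 1) ((k + 1) * m)) := by
  classical
  intro d hd
  obtain ⟨d₁, hd₁, d₂, hd₂, rfl⟩ := mem_add.1 (support_mul _ _ hd)
  rw [support_rename_of_injective (Fin.succ_injective s)] at hd₂
  obtain ⟨d', hd', rfl⟩ := mem_image.1 hd₂
  have hzero : Finsupp.mapDomain Fin.succ d' 0 = 0 :=
    Finsupp.mapDomain_of_notMem_range _ _ fun ⟨i, hi⟩ => Fin.succ_ne_zero i hi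
  have hsucc (i : Fin s) : Finsupp.mapDomain Fin.succ d' i.succ = d' i :=
    Finsupp.mapDomain_apply (Fin.succ_injective s) d' i
  show ∏ j, (1 + (d₁ + _) j) ≤ _
  rw [Fin.prod_univ_succ]
  simp only [Finsupp.add_apply, hzero, hsucc, (hg d₁ hd₁).2 _ (Fin.succ_ne_zero _), zero_add,
    add_zero]
  exact Nat.mul_le_mul (by have := (hg d₁ hd₁).1; omega) (hr hd')

def Interpolates (K : Type*) [CommSemiring K] {σ : Type*} (S : Set (σ →₀ ℕ))
    (Θ : Finset (σ → K)) : Prop :=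
  ∀ y : (σ → K) → K, ∃ p ∈ restrictSupport K S, ∀ θ ∈ Θ, eval θ p = y θ

section Interpolates

variable {K σ : Type*} [CommSemiring K] {S T : Set (σ →₀ ℕ)} {Θ : Finset (σ → K)}

theorem Interpolates.mono (h : Interpolates K S Θ) (hST : S ⊆ T) : Interpolates K T Θ :=
  fun y => (h y).imp fun _ ⟨hp, hpΘ⟩ => ⟨restrictSupport_mono K hST hp, hpΘ⟩

theorem interpolates_empty (S : Set (σ →₀ ℕ)) : Interpolates K S ∅ :=
  fun _ => ⟨0, zero_mem _, by simp⟩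

end Interpolates

theorem interpolates_hyperbolicCross_zero {K : Type*} [CommSemiring K] (Θ : Finset (Fin 0 → K)) :
    Interpolates K (hyperbolicCross 0 #Θ) Θ := by
  rcases Θ.eq_empty_or_nonempty with rfl | ⟨θ₀, hθ₀⟩
  · exact interpolates_empty _
  refine fun y => ⟨C (y θ₀), fun d _ => ?_, fun θ _ => by rw [Subsingleton.elim θ θ₀, eval_C]⟩
  simpa [hyperbolicCross] using card_pos.2 ⟨θ₀, hθ₀⟩

theorem interpolates_hyperbolicCross_succ {K : Type*} [Field K] {s : ℕ}
    (ih : ∀ Θ : Finset (Fin s → K), Interpolates K (hyperbolicCross s #Θ) Θ)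
    {Θ : Finset (Fin (s + 1) → K)}
    (hΘ : ∀ Θ' ⊂ Θ, Interpolates K (hyperbolicCross (s + 1) #Θ') Θ') :
    Interpolates K (hyperbolicCross (s + 1) #Θ) Θ := by
  classical
  rcases Θ.eq_empty_or_nonempty with rfl | hne
  · exact interpolates_empty _
  intro y
  set V := Θ.image (· 0)
  obtain ⟨c, hcV, hfiber⟩ := exists_card_mul_card_fiber_le Θ (· 0) (hne.image _)
  set Θc := {θ ∈ Θ | θ 0 = c}
  have hssub : {θ ∈ Θ | θ 0 ≠ c} ⊂ Θ := by
    obtain ⟨θ, hθ, rfl⟩ := mem_image.1 hcV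
    exact filter_ssubset.2 ⟨θ, hθ, not_not.2 rfl⟩
  obtain ⟨q, hq, hqΘ⟩ := hΘ _ hssub y
  obtain ⟨r, hr, hrΘ⟩ := ih (Θc.image Fin.tail) fun φ => y (Fin.cons c φ) - eval (Fin.cons c φ) q
  obtain ⟨g, hg, hg₀, hg₁⟩ := exists_lagrange_basis_of_notMem (0 : Fin (s + 1)) (V.erase c)
    (notMem_erase c V)
  refine ⟨q + g * rename Fin.succ r, add_mem ?_ ?_, fun θ hθ => ?_⟩
  · exact restrictSupport_mono K (hyperbolicCross_mono (card_le_card hssub.subset)) hq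
  · refine restrictSupport_mono K (hyperbolicCross_mono ?_)
      (mul_rename_succ_mem_restrictSupport_hyperbolicCross hg hr)
    calc (#(V.erase c) + 1) * #(Θc.image Fin.tail) ≤ #V * #Θc := by
          rw [card_erase_add_one hcV]
          exact Nat.mul_le_mul_left _ card_image_le
      _ ≤ #Θ := hfiber
  · by_cases hθc : θ 0 = c
    · have hrθ := hrΘ (Fin.tail θ) (mem_image_of_mem _ (mem_filter.2 ⟨hθ, hθc⟩))
      rw [← hθc, Fin.cons_self_tail] at hrθ
      rw [map_add, map_mul, hg₁ θ hθc, one_mul, eval_rename,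
        show θ ∘ Fin.succ = Fin.tail θ from rfl, hrθ, add_sub_cancel]
    · rw [map_add, map_mul, hg₀ θ (mem_erase.2 ⟨hθc, mem_image_of_mem _ hθ⟩), zero_mul, add_zero]
      exact hqΘ θ (mem_filter.2 ⟨hθ, hθc⟩)

theorem interpolates_hyperbolicCross {K : Type*} [Field K] {s : ℕ} (Θ : Finset (Fin s → K)) :
    Interpolates K (hyperbolicCross s #Θ) Θ := by
  induction s with
  | zero => exact interpolates_hyperbolicCross_zero Θ
  | succ s ih =>
    induction Θ using strongInduction with
    | H Θ hΘ => exact interpolates_hyperbolicCross_succ ih hΘ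

theorem mulVec_coeff_eq_eval {K σ : Type*} [CommSemiring K] [Fintype σ] {Θ : Finset (σ → K)}
    {Υ : Finset (σ → ℕ)} {p : MvPolynomial σ K} (hp : p ∈ restrictSupport K {d | ⇑d ∈ Υ}) :
    (Matrix.of fun (θ : Θ) (α : Υ) => ∏ j, θ.1 j ^ α.1 j) *ᵥ
      (fun α => coeff (Finsupp.equivFunOnFinite.symm α.1) p) = fun θ => eval θ.1 p := by
  funext θ
  have hsupp : p.support ⊆ Υ.map Finsupp.equivFunOnFinite.symm.toEmbedding := fun d hd =>
    mem_map_equiv.2 (hp hd)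
  rw [eval_eq', sum_subset hsupp fun d _ hd => by rw [notMem_support_iff.1 hd, zero_mul],
    sum_map, Matrix.mulVec, dotProduct, ← sum_coe_sort Υ]
  refine sum_congr rfl fun α _ => ?_
  simp [mul_comm]

theorem rank_eq_card_of_interpolates {K σ : Type*} [Field K] [Fintype σ] {Θ : Finset (σ → K)}
    {Υ : Finset (σ → ℕ)} (h : Interpolates K {d | ⇑d ∈ Υ} Θ) :
    (Matrix.of fun (θ : Θ) (α : Υ) => ∏ j, θ.1 j ^ α.1 j).rank = #Θ := by
  classical
  set M := Matrix.of fun (θ : Θ) (α : Υ) => ∏ j, θ.1 j ^ α.1 j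
  have hsurj : Function.Surjective M.mulVecLin := fun y => by
    obtain ⟨p, hp, hpΘ⟩ := h fun θ => if hθ : θ ∈ Θ then y ⟨θ, hθ⟩ else 0
    exact ⟨_, (mulVec_coeff_eq_eval hp).trans (funext fun θ => by simp [hpΘ θ.1 θ.2])⟩
  rw [Matrix.rank, LinearMap.range_eq_top.2 hsurj, finrank_top, Module.finrank_fintype_fun_eq_card,
    Fintype.card_coe]

open Finset in
theorem hyperbolic_cross_interpolation_general (s n : ℕ) (Θ : Finset (Fin s → ℂ))
    (hcard : Θ.card = n)
    (Υ : Finset (Fin s → ℕ))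
    (hΥ : ∀ α : Fin s → ℕ, α ∈ Υ ↔ (∏ j, (1 + α j)) ≤ n) :
    Matrix.rank (Matrix.of fun (θ : Θ) (α : Υ) => ∏ j, θ.1 j ^ α.1 j) = n := by
  subst hcard
  exact rank_eq_card_of_interpolates ((interpolates_hyperbolicCross Θ).mono fun d hd => (hΥ d).2 hd)

open Finset in
/-- the hyperbolic cross `Υ_n` admits interpolation at any `n`
distinct points of the algebraic torus: the Vandermonde matrix `V(Θ; Υ_n)` has
full row rank `n`. -/
theorem hyperbolic_cross_interpolation (s n : ℕ) (Θ : Finset (Fin s → ℂ))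
    (hcard : Θ.card = n) (hΘ : ∀ θ ∈ Θ, ∀ j, θ j ≠ 0)
    (Υ : Finset (Fin s → ℕ))
    (hΥ : ∀ α : Fin s → ℕ, α ∈ Υ ↔ (∏ j, (1 + α j)) ≤ n) :
    Matrix.rank (Matrix.of fun (θ : Θ) (α : Υ) => ∏ j, θ.1 j ^ α.1 j) = n :=
  hyperbolic_cross_interpolation_general s n Θ hcard Υ hΥ
end
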